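/- arXiv:2504.21402 — 7 statements merged into one kernel-verified Lean document; each statement's English description precedes it below -/
import Mathlib

section
/- Let X be a metric space and S₁, S₂ : X → X with S₂ strongly quasi-nonexpansive, S₁ quasi-nonexpansive, and Fix(S₁) ∩ Fix(S₂) ≠ ∅. Then Fix(S₂ ∘ S₁) = Fix(S₁) ∩ Fix(S₂). -/
open Filter Metric

variable {X : Type*} [MetricSpace X]

/-- Fixed point set of a self-map. -/
def FixSet (S : X → X) : Set X := {x | S x = x}

/-- Quasi-nonexpansive: nonempty fixed point set and `dist (S x) q ≤ dist x q`
for every `x` and every fixed point `q`. -/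
def QuasiNonexpansive (S : X → X) : Prop :=
  (FixSet S).Nonempty ∧ ∀ x q, q ∈ FixSet S → dist (S x) q ≤ dist x q

/-- Strongly quasi-nonexpansive. -/
def StronglyQuasiNonexpansive (S : X → X) : Prop :=
  QuasiNonexpansive S ∧
    ∀ x : ℕ → X, Bornology.IsBounded (Set.range x) →
      ∀ q ∈ FixSet S,
        Tendsto (fun n => dist (x n) q - dist (S (x n)) q) atTop (nhds 0) →
        Tendsto (fun n => dist (x n) (S (x n))) atTop (nhds 0)

/-- Complete CAT(0) (Hadamard) space: complete and every pair of points has a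
midpoint satisfying the CN (comparison) inequality. -/
def IsHadamard (X : Type*) [MetricSpace X] : Prop :=
  CompleteSpace X ∧
    ∀ x y : X, ∃ m : X, dist x m = dist x y / 2 ∧ dist y m = dist x y / 2 ∧
      ∀ z : X, dist z m ^ 2 ≤ (dist z x ^ 2 + dist z y ^ 2) / 2 - dist x y ^ 2 / 4

/-- `z` is an asymptotic center of the bounded sequence `x`. -/
def AsympCenter (x : ℕ → X) (z : X) : Prop :=
  ∀ y : X, limsup (fun n => dist z (x n)) atTop ≤ limsup (fun n => dist y (x n)) atTop

/-- Δ-convergence: `x` is bounded and `z` is an asymptotic center of every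
subsequence of `x`. -/
def DeltaConv (x : ℕ → X) (z : X) : Prop :=
  Bornology.IsBounded (Set.range x) ∧
    ∀ φ : ℕ → ℕ, StrictMono φ → AsympCenter (x ∘ φ) z

/-- Δ-demiclosed mapping. -/
def DeltaDemiclosed (S : X → X) : Prop :=
  ∀ (x : ℕ → X) (z : X), DeltaConv x z →
    Tendsto (fun n => dist (x n) (S (x n))) atTop (nhds 0) → z ∈ FixSet S

/-- Orbital Δ-demiclosed mapping. -/
def OrbitalDeltaDemiclosed (S : X → X) : Prop :=
  ∀ (x : ℕ → X) (z : X),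
    (∃ (x0 : X) (φ : ℕ → ℕ), StrictMono φ ∧ ∀ n, x n = S^[φ n] x0) →
    DeltaConv x z →
    Tendsto (fun n => dist (x n) (S (x n))) atTop (nhds 0) → z ∈ FixSet S

/-- Composition `S (k-1) ∘ ⋯ ∘ S 0` of the first `k` mappings. -/
def compUpTo (S : ℕ → X → X) : ℕ → X → X
  | 0 => id
  | k + 1 => S k ∘ compUpTo S k

/-- A geodesically convex subset of a uniquely geodesic space: contains every
metric between-point of any two of its points. -/
def GConvex (C : Set X) : Prop :=
  ∀ x ∈ C, ∀ y ∈ C, ∀ z : X, dist x z + dist z y = dist x y → z ∈ C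

/-- Geodesic convexity of an extended-real-valued function. -/
def GConvexFun (f : X → EReal) : Prop :=
  ∀ x y z : X, ∀ t : ℝ, t ∈ Set.Icc (0 : ℝ) 1 →
    dist x z = t * dist x y → dist z y = (1 - t) * dist x y →
    f z ≤ ((1 - t : ℝ) : EReal) * f x + ((t : ℝ) : EReal) * f y

/-- Set of global minimizers. -/
def argminSet (f : X → EReal) : Set X := {x | ∀ y, f x ≤ f y}

/-- `R` is the resolvent of `f` with parameter `lam`. -/
def IsResolvent (f : X → EReal) (lam : ℝ) (R : X → X) : Prop :=
  ∀ x y : X,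
    f (R x) + (((dist x (R x)) ^ 2 / (2 * lam) : ℝ) : EReal) ≤
      f y + (((dist x y) ^ 2 / (2 * lam) : ℝ) : EReal)

/-! If `S₂ (S₁ x) = x` and `q` is a common fixed point, then
`d(x, q) ≤ d(S₁ x, q) ≤ d(x, q)`, so `S₂` keeps the distance of `S₁ x` to `q`. Strong
quasi-nonexpansiveness applied to the constant sequence `S₁ x` then forces `S₂ (S₁ x) = S₁ x`,
hence `S₁ x = x` and `S₂ x = x`. -/

theorem StronglyQuasiNonexpansive.apply_eq_of_dist_eq {X : Type*} [MetricSpace X] {S : X → X}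
    (hS : StronglyQuasiNonexpansive S) {q : X} (hq : q ∈ FixSet S) {y : X}
    (h : dist (S y) q = dist y q) : S y = y := by
  have hbdd : Bornology.IsBounded (Set.range fun _ : ℕ => y) := by
    rw [Set.range_const]
    exact Bornology.isBounded_singleton
  have hlim := hS.2 (fun _ => y) hbdd q hq (by simp [h])
  exact (dist_eq_zero.mp (tendsto_const_nhds_iff.mp hlim)).symm

theorem stmt1 {X : Type*} [MetricSpace X] (S₁ S₂ : X → X)
    (h₂ : StronglyQuasiNonexpansive S₂) (h₁ : QuasiNonexpansive S₁)
    (hInt : (FixSet S₁ ∩ FixSet S₂).Nonempty) :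
    FixSet (S₂ ∘ S₁) = FixSet S₁ ∩ FixSet S₂ := by
  obtain ⟨q, hq₁, hq₂⟩ := hInt
  ext x
  constructor
  · intro hx
    change S₂ (S₁ x) = x at hx
    have hS₂ : S₂ (S₁ x) = S₁ x := by
      refine h₂.apply_eq_of_dist_eq hq₂ (le_antisymm (h₂.1.2 _ q hq₂) ?_)
      calc dist (S₁ x) q ≤ dist x q := h₁.2 x q hq₁
        _ = dist (S₂ (S₁ x)) q := by rw [hx]
    have hS₁ : S₁ x = x := hS₂.symm.trans hx
    exact ⟨hS₁, hS₁ ▸ hS₂⟩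
  · rintro ⟨hx₁, hx₂⟩
    change S₂ (S₁ x) = x
    rw [hx₁, hx₂]
end

section
/- Let X be a metric space and S₁, …, Sₘ : X → X be strongly quasi-nonexpansive mappings with ⋂ᵢ Fix(Sᵢ) ≠ ∅. Then the fixed point set of the composition Sₘ ∘ Sₘ₋₁ ∘ ⋯ ∘ S₁ equals ⋂ᵢ₌₁ᵐ Fix(Sᵢ). -/
open Filter Metric

variable {X : Type*} [MetricSpace X]

/-!
Fix a common fixed point `q`. Along the partial compositions `x, S₀ x, S₁ (S₀ x), …` the distance
to `q` cannot increase, so if the full composition fixes `x` all these distances are equal. A strongly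
quasi-nonexpansive map that does not move the distance to one of its fixed points must fix the point
(apply the defining property to a constant sequence), so every `Sᵢ` fixes `x`.
-/

theorem StronglyQuasiNonexpansive.apply_eq_self_of_dist_eq {S : X → X}
    (hS : StronglyQuasiNonexpansive S) {q y : X} (hq : q ∈ FixSet S)
    (h : dist (S y) q = dist y q) : S y = y := by
  have hconst : Tendsto (fun _ : ℕ => dist y q - dist (S y) q) atTop (nhds 0) := by
    simp [h]
  have hlim := hS.2 (fun _ => y) (by simp) q hq hconst
  exact (dist_eq_zero.1 (tendsto_nhds_unique tendsto_const_nhds hlim)).symm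

namespace compUpTo

theorem succ_apply {α : Type*} (S : ℕ → α → α) (k : ℕ) (x : α) :
    compUpTo S (k + 1) x = S k (compUpTo S k x) := rfl

theorem apply_eq_self {α : Type*} {S : ℕ → α → α} {k : ℕ} {x : α} (hx : ∀ i < k, S i x = x) :
    compUpTo S k x = x := by
  induction k with
  | zero => rfl
  | succ k ih =>
    rw [succ_apply, ih fun i hi => hx i (by omega), hx k k.lt_succ_self]

theorem dist_le_of_le {S : ℕ → X → X} {m : ℕ} {q : X}
    (hS : ∀ i < m, ∀ y, dist (S i y) q ≤ dist y q) (x : X) {j k : ℕ} (hjk : j ≤ k) (hkm : k ≤ m) :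
    dist (compUpTo S k x) q ≤ dist (compUpTo S j x) q := by
  induction k, hjk using Nat.le_induction with
  | base => exact le_rfl
  | succ k _ ih => exact (hS k (by omega) _).trans (ih (by omega))

theorem forall_apply_eq_self {S : ℕ → X → X} {m : ℕ} {q x : X}
    (hle : ∀ i < m, ∀ y, dist (S i y) q ≤ dist y q)
    (hrigid : ∀ i < m, ∀ y, dist (S i y) q = dist y q → S i y = y)
    (hx : compUpTo S m x = x) : ∀ i < m, S i x = x := by
  suffices ∀ k ≤ m, ∀ i < k, S i x = x from this m le_rfl
  intro k hk
  induction k with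
  | zero => simp
  | succ k ih =>
    have ih := ih (by omega)
    have hSk : S k x = x := by
      refine hrigid k (by omega) x (le_antisymm (hle k (by omega) x) ?_)
      calc dist x q = dist (compUpTo S m x) q := by rw [hx]
        _ ≤ dist (compUpTo S (k + 1) x) q := dist_le_of_le hle x hk le_rfl
        _ = dist (S k x) q := by rw [succ_apply, apply_eq_self ih]
    intro i hi
    rcases Nat.lt_succ_iff_lt_or_eq.1 hi with hi | rfl
    exacts [ih i hi, hSk]

end compUpTo

theorem stmt2 {X : Type*} [MetricSpace X] (m : ℕ) (S : ℕ → X → X)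
    (hS : ∀ i < m, StronglyQuasiNonexpansive (S i))
    (hInt : (⋂ i ∈ Finset.range m, FixSet (S i)).Nonempty) :
    FixSet (compUpTo S m) = ⋂ i ∈ Finset.range m, FixSet (S i) := by
  obtain ⟨q, hq⟩ := hInt
  simp only [Set.mem_iInter₂, Finset.mem_range] at hq
  ext x
  simp only [Set.mem_iInter₂, Finset.mem_range]
  have hle : ∀ i < m, ∀ y, dist (S i y) q ≤ dist y q := fun i hi y => (hS i hi).1.2 y q (hq i hi)
  have hrigid : ∀ i < m, ∀ y, dist (S i y) q = dist y q → S i y = y := fun i hi _ =>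
    (hS i hi).apply_eq_self_of_dist_eq (hq i hi)
  exact ⟨compUpTo.forall_apply_eq_self hle hrigid, compUpTo.apply_eq_self⟩
end

section
/- Let X be a metric space and S₁, S₂ : X → X be strongly quasi-nonexpansive mappings with Fix(S₁) ∩ Fix(S₂) ≠ ∅. Then the composition S₂ ∘ S₁ is strongly quasi-nonexpansive: for every bounded sequence (xₙ) and every q ∈ Fix(S₂ ∘ S₁) with lim (d(xₙ, q) − d(S₂ S₁ xₙ, q)) = 0, one has lim d(xₙ, S₂ S₁ xₙ) = 0, and moreover d(S₂ S₁ x, q) ≤ d(x, q) for all x and q ∈ Fix(S₂ ∘ S₁). -/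
open Filter Metric

variable {X : Type*} [MetricSpace X]

/-
If `p` is a common fixed point and `S₂ (S₁ q) = q`, then
`d(q, p) ≤ d(S₁ q, p) ≤ d(q, p)`, and strong quasi-nonexpansiveness of `S₁` applied to the
constant sequence `q` forces `S₁ q = q`; hence `Fix(S₂ ∘ S₁) = Fix(S₁) ∩ Fix(S₂)`.
For a fixed point `q` of the composition the defect `d(xₙ, q) - d(S₂ S₁ xₙ, q)` is the sum of
the two nonnegative defects of `S₁` at `xₙ` and of `S₂` at `S₁ xₙ`, so both tend to `0`, and
the triangle inequality through `S₁ xₙ` gives `d(xₙ, S₂ S₁ xₙ) → 0`.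
-/

section

variable {S S₁ S₂ : X → X}

lemma dist_comp_le_of_mem_inter (h₁ : QuasiNonexpansive S₁) (h₂ : QuasiNonexpansive S₂)
    {q : X} (hq : q ∈ FixSet S₁ ∩ FixSet S₂) (x : X) :
    dist ((S₂ ∘ S₁) x) q ≤ dist x q :=
  (h₂.2 _ q hq.2).trans (h₁.2 x q hq.1)

lemma StronglyQuasiNonexpansive.map_eq_self_of_dist_le (h : StronglyQuasiNonexpansive S)
    {p : X} (hp : p ∈ FixSet S) {x : X} (hx : dist x p ≤ dist (S x) p) : S x = x := by
  have hdefect : Tendsto (fun _ : ℕ => dist x p - dist (S x) p) atTop (nhds 0) := by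
    rw [le_antisymm hx (h.1.2 x p hp), sub_self]
    exact tendsto_const_nhds
  have hlim := h.2 (fun _ => x) (by simp [Set.range_const]) p hp hdefect
  exact (dist_eq_zero.mp (tendsto_nhds_unique tendsto_const_nhds hlim)).symm

lemma fixSet_comp_eq_inter (h₁ : StronglyQuasiNonexpansive S₁) (h₂ : QuasiNonexpansive S₂)
    {p : X} (hp : p ∈ FixSet S₁ ∩ FixSet S₂) :
    FixSet (S₂ ∘ S₁) = FixSet S₁ ∩ FixSet S₂ := by
  refine Set.Subset.antisymm (fun q hq => ?_) fun q hq => (congrArg S₂ hq.1).trans hq.2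
  have hq' : S₂ (S₁ q) = q := hq
  have hS₁ : S₁ q = q := h₁.map_eq_self_of_dist_le hp.1 <| by
    simpa only [hq'] using h₂.2 (S₁ q) p hp.2
  refine ⟨hS₁, ?_⟩
  change S₂ q = q
  rwa [hS₁] at hq'

lemma isBounded_range_comp_of_dist_le {x : ℕ → X} (hx : Bornology.IsBounded (Set.range x))
    {q : X} (hS : ∀ y, dist (S y) q ≤ dist y q) :
    Bornology.IsBounded (Set.range (S ∘ x)) := by
  obtain ⟨r, hr⟩ := hx.subset_closedBall q
  refine (isBounded_closedBall (x := q) (r := r)).subset ?_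
  rintro _ ⟨n, rfl⟩
  exact mem_closedBall.mpr ((hS _).trans (hr ⟨n, rfl⟩))

lemma tendsto_dist_comp_of_tendsto_sub (h₁ : StronglyQuasiNonexpansive S₁)
    (h₂ : StronglyQuasiNonexpansive S₂) {q : X} (hq : q ∈ FixSet S₁ ∩ FixSet S₂)
    {x : ℕ → X} (hx : Bornology.IsBounded (Set.range x))
    (hdefect : Tendsto (fun n => dist (x n) q - dist (S₂ (S₁ (x n))) q) atTop (nhds 0)) :
    Tendsto (fun n => dist (x n) (S₂ (S₁ (x n)))) atTop (nhds 0) := by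
  have hle₁ : ∀ y, dist (S₁ y) q ≤ dist y q := fun y => h₁.1.2 y q hq.1
  have hle₂ : ∀ y, dist (S₂ y) q ≤ dist y q := fun y => h₂.1.2 y q hq.2
  have hdefect₁ : Tendsto (fun n => dist (x n) q - dist (S₁ (x n)) q) atTop (nhds 0) :=
    squeeze_zero (fun n => sub_nonneg.mpr (hle₁ _))
      (fun n => by linarith [hle₂ (S₁ (x n))]) hdefect
  have hdefect₂ :
      Tendsto (fun n => dist (S₁ (x n)) q - dist (S₂ (S₁ (x n))) q) atTop (nhds 0) :=
    squeeze_zero (fun n => sub_nonneg.mpr (hle₂ _))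
      (fun n => by linarith [hle₁ (x n)]) hdefect
  have hreg₁ := h₁.2 x hx q hq.1 hdefect₁
  have hreg₂ := h₂.2 (S₁ ∘ x) (isBounded_range_comp_of_dist_le hx hle₁) q hq.2 hdefect₂
  refine squeeze_zero (fun n => dist_nonneg) (fun n => dist_triangle _ (S₁ (x n)) _) ?_
  simpa only [Function.comp_apply, add_zero] using hreg₁.add hreg₂

end

theorem stmt3 {X : Type*} [MetricSpace X] (S₁ S₂ : X → X)
    (h₁ : StronglyQuasiNonexpansive S₁) (h₂ : StronglyQuasiNonexpansive S₂)
    (hInt : (FixSet S₁ ∩ FixSet S₂).Nonempty) :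
    StronglyQuasiNonexpansive (S₂ ∘ S₁) := by
  obtain ⟨p, hp⟩ := hInt
  have hfix := fixSet_comp_eq_inter h₁ h₂.1 hp
  exact ⟨⟨⟨p, hfix ▸ hp⟩, fun x q hq => dist_comp_le_of_mem_inter h₁.1 h₂.1 (hfix ▸ hq) x⟩,
    fun x hx q hq => tendsto_dist_comp_of_tendsto_sub h₁ h₂ (hfix ▸ hq) hx⟩
end

section
/- Let X be a metric space, S₁, …, Sₘ : X → X quasi-nonexpansive with common fixed point q, and (xₙ) a bounded sequence such that lim (d(xₙ, q) − d(Sₘ⋯S₁ xₙ, q)) = 0. Then for every k with 1 ≤ k ≤ m, lim (d(xₙ, q) − d(Sₖ⋯S₁ xₙ, q)) = 0 and lim (d(Sₖ₋₁⋯S₁ xₙ, q) − d(Sₖ⋯S₁ xₙ, q)) = 0 (with the convention that the empty composition is the identity). -/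
/-! Distances to the common fixed point `q` decrease along `x, S₁ x, S₂ S₁ x, …, Sₘ⋯S₁ x`,
so each of the two differences lies between `0` and `d(x, q) - d(Sₘ⋯S₁ x, q)`. -/

open Filter Metric

variable {X : Type*} [MetricSpace X]

theorem Filter.Tendsto.sub_of_le_of_le_of_le {ι : Type*} {l : Filter ι} {a b c d : ι → ℝ}
    (had : Tendsto (fun n => a n - d n) l (nhds 0))
    (hdc : ∀ n, d n ≤ c n) (hcb : ∀ n, c n ≤ b n) (hba : ∀ n, b n ≤ a n) :
    Tendsto (fun n => b n - c n) l (nhds 0) :=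
  tendsto_of_tendsto_of_tendsto_of_le_of_le tendsto_const_nhds had
    (fun n => sub_nonneg.2 (hcb n)) (fun n => by linarith [hdc n, hba n])

theorem antitoneOn_dist_compUpTo {m : ℕ} {S : ℕ → X → X} {q : X}
    (hS : ∀ i < m, ∀ y, dist (S i y) q ≤ dist y q) (x : X) :
    AntitoneOn (fun k => dist (compUpTo S k x) q) (Set.Iic m) :=
  antitoneOn_of_add_one_le Set.ordConnected_Iic fun k _ _ hk =>
    hS k (Nat.add_one_le_iff.1 hk) (compUpTo S k x)

theorem stmt5_general {X : Type*} [MetricSpace X] (m : ℕ) (S : ℕ → X → X)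
    (hS : ∀ i < m, QuasiNonexpansive (S i))
    (q : X) (hq : ∀ i < m, q ∈ FixSet (S i))
    (x : ℕ → X)
    (hlim : Tendsto (fun n => dist (x n) q - dist (compUpTo S m (x n)) q) atTop (nhds 0)) :
    ∀ k, 1 ≤ k → k ≤ m →
      Tendsto (fun n => dist (x n) q - dist (compUpTo S k (x n)) q) atTop (nhds 0) ∧
      Tendsto (fun n => dist (compUpTo S (k - 1) (x n)) q - dist (compUpTo S k (x n)) q)
        atTop (nhds 0) := by
  intro k _ hkm
  have dist_le {j k} (hjk : j ≤ k) (hkm : k ≤ m) n :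
      dist (compUpTo S k (x n)) q ≤ dist (compUpTo S j (x n)) q :=
    antitoneOn_dist_compUpTo (fun i hi y => (hS i hi).2 y q (hq i hi)) (x n)
      (Set.mem_Iic.2 (hjk.trans hkm)) (Set.mem_Iic.2 hkm) hjk
  have hpred : k - 1 ≤ k := Nat.sub_le k 1
  exact ⟨hlim.sub_of_le_of_le_of_le (dist_le hkm le_rfl) (dist_le k.zero_le hkm) fun _ => le_rfl,
    hlim.sub_of_le_of_le_of_le (dist_le hkm le_rfl) (dist_le hpred hkm)
      (dist_le (k - 1).zero_le (hpred.trans hkm))⟩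

theorem stmt5 {X : Type*} [MetricSpace X] (m : ℕ) (S : ℕ → X → X)
    (hS : ∀ i < m, QuasiNonexpansive (S i))
    (q : X) (hq : ∀ i < m, q ∈ FixSet (S i))
    (x : ℕ → X) (hb : Bornology.IsBounded (Set.range x))
    (hlim : Tendsto (fun n => dist (x n) q - dist (compUpTo S m (x n)) q) atTop (nhds 0)) :
    ∀ k, 1 ≤ k → k ≤ m →
      Tendsto (fun n => dist (x n) q - dist (compUpTo S k (x n)) q) atTop (nhds 0) ∧
      Tendsto (fun n => dist (compUpTo S (k - 1) (x n)) q - dist (compUpTo S k (x n)) q)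
        atTop (nhds 0) :=
  stmt5_general m S hS q hq x hlim
end

section
/- Let X be a metric space and S : X → X a strongly quasi-nonexpansive mapping with Fix(S) ≠ ∅. Then for every p ∈ X the Picard iterates xₙ := Sⁿ(p) satisfy lim_{n→∞} d(xₙ, S xₙ) = 0 (i.e., the iterates are asymptotically regular). -/
open Filter Metric

variable {X : Type*} [MetricSpace X]

section Orbit

variable {S : X → X} {q : X}

theorem antitone_dist_iterate (hq : ∀ x, dist (S x) q ≤ dist x q) (p : X) :
    Antitone fun n => dist (S^[n] p) q :=
  antitone_nat_of_succ_le fun n => by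
    rw [Function.iterate_succ_apply']
    exact hq _

theorem isBounded_range_iterate (hq : ∀ x, dist (S x) q ≤ dist x q) (p : X) :
    Bornology.IsBounded (Set.range fun n => S^[n] p) :=
  isBounded_closedBall.subset <| Set.range_subset_iff.2 fun n =>
    mem_closedBall.2 (antitone_dist_iterate hq p n.zero_le)

/-- Along the orbit the distances to `q` decrease to a limit, so consecutive ones differ by
less and less. -/
theorem tendsto_dist_iterate_sub_dist_apply_iterate (hq : ∀ x, dist (S x) q ≤ dist x q)
    (p : X) :
    Tendsto (fun n => dist (S^[n] p) q - dist (S (S^[n] p)) q) atTop (nhds 0) := by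
  have hlim : Tendsto (fun n => dist (S^[n] p) q) atTop (nhds (⨅ n, dist (S^[n] p) q)) :=
    tendsto_atTop_ciInf (antitone_dist_iterate hq p)
      ⟨0, Set.forall_mem_range.2 fun _ => dist_nonneg⟩
  have hshift := hlim.comp (tendsto_add_atTop_nat 1)
  simpa only [sub_self, Function.comp_def, Function.iterate_succ_apply'] using hlim.sub hshift

end Orbit

theorem stmt7_general {X : Type*} [MetricSpace X] (S : X → X)
    (hS : StronglyQuasiNonexpansive S) (p : X) :
    Tendsto (fun n : ℕ => dist (S^[n] p) (S (S^[n] p))) atTop (nhds 0) := by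
  obtain ⟨⟨⟨q, hq⟩, hdist⟩, hstrong⟩ := hS
  exact hstrong _ (isBounded_range_iterate (hdist · q hq) p) q hq
    (tendsto_dist_iterate_sub_dist_apply_iterate (hdist · q hq) p)

theorem stmt7 {X : Type*} [MetricSpace X] (S : X → X)
    (hS : StronglyQuasiNonexpansive S) (hfix : (FixSet S).Nonempty) (p : X) :
    Tendsto (fun n : ℕ => dist (S^[n] p) (S (S^[n] p))) atTop (nhds 0) :=
  stmt7_general S hS p
end

section
/- Let X be a complete CAT(0) space and S₁, S₂ : X → X strongly quasi-nonexpansive Δ-demiclosed mappings with Fix(S₁) ∩ Fix(S₂) ≠ ∅. Then S₂ ∘ S₁ is a strongly quasi-nonexpansive orbital Δ-demiclosed mapping. -/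
open Filter Metric

variable {X : Type*} [MetricSpace X]

/-!
If `q` is a common fixed point of `S₁` and `S₂`, neither map moves a point farther from `q`, so
the loss `dist x q - dist (S₂ (S₁ x)) q` of the composite is the sum of two nonnegative losses,
one for `S₁` at `x` and one for `S₂` at `S₁ x`. A fixed point of the composite has zero loss,
hence zero loss for `S₁`, which gives `Fix (S₂ ∘ S₁) = Fix S₁ ∩ Fix S₂`. When it tends to zero along a bounded sequence,
so does each of them, and strong quasi-nonexpansiveness of `S₁` and `S₂` makes `xₙ`, `S₁ xₙ`
and `S₂ (S₁ xₙ)` asymptotically close. Asymptotically close sequences have the same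
Δ-limits, so Δ-demiclosedness of `S₁` and `S₂` passes to `S₂ ∘ S₁`.
-/

open Bornology Set

theorem QuasiNonexpansive.isBounded_image {S : X → X} (hS : QuasiNonexpansive S) {s : Set X}
    (hs : IsBounded s) : IsBounded (S '' s) := by
  obtain ⟨q, hq⟩ := hS.1
  obtain ⟨r, hr⟩ := (isBounded_iff_subset_closedBall q).1 hs
  refine (isBounded_iff_subset_closedBall q).2 ⟨r, ?_⟩
  rintro _ ⟨y, hy, rfl⟩
  exact (hS.2 y q hq).trans (hr hy)

theorem StronglyQuasiNonexpansive.mem_fixSet_of_dist_eq {S : X → X}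
    (hS : StronglyQuasiNonexpansive S) {p q : X} (hq : q ∈ FixSet S)
    (h : dist (S p) q = dist p q) : p ∈ FixSet S := by
  have hlim := hS.2 (fun _ => p) (by simp) q hq (by simp [h])
  exact (dist_eq_zero.1 (tendsto_const_nhds_iff.1 hlim)).symm

theorem fixSet_comp {S₁ S₂ : X → X} (h₁ : StronglyQuasiNonexpansive S₁)
    (h₂ : QuasiNonexpansive S₂) (hInt : (FixSet S₁ ∩ FixSet S₂).Nonempty) :
    FixSet (S₂ ∘ S₁) = FixSet S₁ ∩ FixSet S₂ := by
  obtain ⟨q, hq₁, hq₂⟩ := hInt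
  ext p
  refine ⟨fun hp => ?_, fun ⟨hp₁, hp₂⟩ => ?_⟩
  · have hp' : S₂ (S₁ p) = p := hp
    have hS₂ := h₂.2 (S₁ p) q hq₂
    rw [hp'] at hS₂
    have hp₁ : S₁ p = p :=
      h₁.mem_fixSet_of_dist_eq hq₁ (le_antisymm (h₁.1.2 p q hq₁) hS₂)
    exact ⟨hp₁, by rwa [hp₁] at hp'⟩
  · change S₂ (S₁ p) = p
    rw [show S₁ p = p from hp₁, show S₂ p = p from hp₂]

theorem quasiNonexpansive_comp {S₁ S₂ : X → X} (h₁ : StronglyQuasiNonexpansive S₁)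
    (h₂ : QuasiNonexpansive S₂) (hInt : (FixSet S₁ ∩ FixSet S₂).Nonempty) :
    QuasiNonexpansive (S₂ ∘ S₁) := by
  rw [QuasiNonexpansive, fixSet_comp h₁ h₂ hInt]
  exact ⟨hInt, fun x p hp => (h₂.2 (S₁ x) p hp.2).trans (h₁.1.2 x p hp.1)⟩

theorem tendsto_dist_apply_of_tendsto_dist_sub_dist_comp {S₁ S₂ : X → X}
    (h₁ : StronglyQuasiNonexpansive S₁) (h₂ : StronglyQuasiNonexpansive S₂) {x : ℕ → X}
    (hx : IsBounded (range x)) {p : X} (hp : p ∈ FixSet S₁ ∩ FixSet S₂)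
    (h : Tendsto (fun n => dist (x n) p - dist (S₂ (S₁ (x n))) p) atTop (nhds 0)) :
    Tendsto (fun n => dist (x n) (S₁ (x n))) atTop (nhds 0) ∧
      Tendsto (fun n => dist (S₁ (x n)) (S₂ (S₁ (x n)))) atTop (nhds 0) := by
  set a := fun n => dist (x n) p - dist (S₁ (x n)) p
  set b := fun n => dist (S₁ (x n)) p - dist (S₂ (S₁ (x n))) p
  have ha : ∀ n, 0 ≤ a n := fun n => sub_nonneg.2 (h₁.1.2 (x n) p hp.1)
  have hb : ∀ n, 0 ≤ b n := fun n => sub_nonneg.2 (h₂.1.2 (S₁ (x n)) p hp.2)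
  have hab : ∀ n, a n + b n = dist (x n) p - dist (S₂ (S₁ (x n))) p := fun n => by
    simp only [a, b]; ring
  have hSx : IsBounded (range (S₁ ∘ x)) := by
    rw [range_comp]; exact h₁.1.isBounded_image hx
  refine ⟨h₁.2 x hx p hp.1 ?_, h₂.2 (S₁ ∘ x) hSx p hp.2 ?_⟩
  · exact squeeze_zero ha (fun n => (le_add_of_nonneg_right (hb n)).trans_eq (hab n)) h
  · exact squeeze_zero hb (fun n => (le_add_of_nonneg_left (ha n)).trans_eq (hab n)) h

theorem StronglyQuasiNonexpansive.comp {S₁ S₂ : X → X} (h₂ : StronglyQuasiNonexpansive S₂)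
    (h₁ : StronglyQuasiNonexpansive S₁) (hInt : (FixSet S₁ ∩ FixSet S₂).Nonempty) :
    StronglyQuasiNonexpansive (S₂ ∘ S₁) := by
  refine ⟨quasiNonexpansive_comp h₁ h₂.1 hInt, fun x hx p hp h => ?_⟩
  rw [fixSet_comp h₁ h₂.1 hInt] at hp
  obtain ⟨hx₁, hx₂⟩ := tendsto_dist_apply_of_tendsto_dist_sub_dist_comp h₁ h₂ hx hp h
  refine squeeze_zero (fun n => dist_nonneg)
    (fun n => dist_triangle (x n) (S₁ (x n)) (S₂ (S₁ (x n)))) ?_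
  simpa using hx₁.add hx₂

theorem limsup_dist_le_of_tendsto_dist {x y : ℕ → X} (hx : IsBounded (range x))
    (h : Tendsto (fun n => dist (x n) (y n)) atTop (nhds 0)) (v : X) :
    limsup (fun n => dist v (y n)) atTop ≤ limsup (fun n => dist v (x n)) atTop := by
  obtain ⟨r, hr⟩ := (isBounded_iff_subset_closedBall v).1 hx
  have hbdd : IsBoundedUnder (· ≤ ·) atTop (fun n => dist v (x n)) :=
    isBoundedUnder_of ⟨r, fun n => by simpa [dist_comm] using hr (mem_range_self n)⟩
  calc limsup (fun n => dist v (y n)) atTop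
      ≤ limsup ((fun n => dist v (x n)) + fun n => dist (x n) (y n)) atTop :=
        limsup_le_limsup (Eventually.of_forall fun n => dist_triangle _ _ _)
          (isCoboundedUnder_le_of_le atTop fun n => dist_nonneg)
          (isBoundedUnder_le_add hbdd h.isBoundedUnder_le)
    _ ≤ limsup (fun n => dist v (x n)) atTop + limsup (fun n => dist (x n) (y n)) atTop :=
        limsup_add_le (isBoundedUnder_of ⟨0, fun n => dist_nonneg⟩) hbdd
          h.isCoboundedUnder_le h.isBoundedUnder_le
    _ = limsup (fun n => dist v (x n)) atTop := by rw [h.limsup_eq, add_zero]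

theorem DeltaConv.of_tendsto_dist {x y : ℕ → X} {z : X} (hx : DeltaConv x z)
    (hy : IsBounded (range y)) (h : Tendsto (fun n => dist (x n) (y n)) atTop (nhds 0)) :
    DeltaConv y z := by
  refine ⟨hy, fun φ hφ v => ?_⟩
  have hxφ : IsBounded (range (x ∘ φ)) := hx.1.subset (range_comp_subset_range φ x)
  have hyφ : IsBounded (range (y ∘ φ)) := hy.subset (range_comp_subset_range φ y)
  have hφ₀ : Tendsto (fun n => dist (x (φ n)) (y (φ n))) atTop (nhds 0) :=
    h.comp hφ.tendsto_atTop
  have hφ₀' : Tendsto (fun n => dist (y (φ n)) (x (φ n))) atTop (nhds 0) := by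
    simpa only [dist_comm] using hφ₀
  have hlimsup : ∀ w : X, limsup (fun n => dist w (y (φ n))) atTop
      = limsup (fun n => dist w (x (φ n))) atTop := fun w =>
    le_antisymm (limsup_dist_le_of_tendsto_dist hxφ hφ₀ w)
      (limsup_dist_le_of_tendsto_dist hyφ hφ₀' w)
  calc limsup (fun n => dist z ((y ∘ φ) n)) atTop
      = limsup (fun n => dist z ((x ∘ φ) n)) atTop := hlimsup z
    _ ≤ limsup (fun n => dist v ((x ∘ φ) n)) atTop := hx.2 φ hφ v
    _ = limsup (fun n => dist v ((y ∘ φ) n)) atTop := (hlimsup v).symm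

theorem QuasiNonexpansive.tendsto_dist_sub_dist {S : X → X} (hS : QuasiNonexpansive S)
    {q : X} (hq : q ∈ FixSet S) {x : ℕ → X}
    (h : Tendsto (fun n => dist (x n) (S (x n))) atTop (nhds 0)) :
    Tendsto (fun n => dist (x n) q - dist (S (x n)) q) atTop (nhds 0) :=
  squeeze_zero (fun n => sub_nonneg.2 (hS.2 (x n) q hq))
    (fun n => by linarith [dist_triangle (x n) (S (x n)) q]) h

theorem DeltaDemiclosed.comp {S₁ S₂ : X → X} (hd₂ : DeltaDemiclosed S₂) (hd₁ : DeltaDemiclosed S₁)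
    (h₂ : StronglyQuasiNonexpansive S₂) (h₁ : StronglyQuasiNonexpansive S₁)
    (hInt : (FixSet S₁ ∩ FixSet S₂).Nonempty) : DeltaDemiclosed (S₂ ∘ S₁) := by
  intro x z hx h
  obtain ⟨q, hq⟩ := hInt
  have hq' : q ∈ FixSet (S₂ ∘ S₁) := by rwa [fixSet_comp h₁ h₂.1 ⟨q, hq⟩]
  obtain ⟨hx₁, hx₂⟩ := tendsto_dist_apply_of_tendsto_dist_sub_dist_comp h₁ h₂ hx.1 hq
    ((quasiNonexpansive_comp h₁ h₂.1 ⟨q, hq⟩).tendsto_dist_sub_dist hq' h)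
  have hSx : IsBounded (range (S₁ ∘ x)) := by
    rw [range_comp]; exact h₁.1.isBounded_image hx.1
  rw [fixSet_comp h₁ h₂.1 ⟨q, hq⟩]
  exact ⟨hd₁ x z hx hx₁, hd₂ (S₁ ∘ x) z (hx.of_tendsto_dist hSx hx₁) hx₂⟩

theorem DeltaDemiclosed.orbitalDeltaDemiclosed {S : X → X} (hS : DeltaDemiclosed S) :
    OrbitalDeltaDemiclosed S :=
  fun x z _ hx h => hS x z hx h

theorem stmt10_general {X : Type*} [MetricSpace X] (S₁ S₂ : X → X)
    (h₁ : StronglyQuasiNonexpansive S₁) (h₂ : StronglyQuasiNonexpansive S₂)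
    (hd₁ : DeltaDemiclosed S₁) (hd₂ : DeltaDemiclosed S₂)
    (hInt : (FixSet S₁ ∩ FixSet S₂).Nonempty) :
    StronglyQuasiNonexpansive (S₂ ∘ S₁) ∧ OrbitalDeltaDemiclosed (S₂ ∘ S₁) :=
  ⟨h₂.comp h₁ hInt, (hd₂.comp hd₁ h₂ h₁ hInt).orbitalDeltaDemiclosed⟩

theorem stmt10 {X : Type*} [MetricSpace X] (hX : IsHadamard X) (S₁ S₂ : X → X)
    (h₁ : StronglyQuasiNonexpansive S₁) (h₂ : StronglyQuasiNonexpansive S₂)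
    (hd₁ : DeltaDemiclosed S₁) (hd₂ : DeltaDemiclosed S₂)
    (hInt : (FixSet S₁ ∩ FixSet S₂).Nonempty) :
    StronglyQuasiNonexpansive (S₂ ∘ S₁) ∧ OrbitalDeltaDemiclosed (S₂ ∘ S₁) :=
  stmt10_general S₁ S₂ h₁ h₂ hd₁ hd₂ hInt
end

section
/- Let X be a complete CAT(0) space, C₁, …, Cₘ nonempty closed convex subsets with ⋂ᵢ Cᵢ ≠ ∅, and suppose Cₘ is compact. Then for any x₀ ∈ X the cyclic projection iterates xₙ := (P_{Cₘ} ∘ ⋯ ∘ P_{C₁})ⁿ(x₀) converge strongly (in the metric) to some point x* ∈ ⋂ᵢ Cᵢ. -/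
/-!
In a Hadamard space the nearest-point projection onto a closed convex set `C` satisfies
`d(x, Px)² + d(Px, q)² ≤ d(x, q)²` for all `q ∈ C`. Hence the cyclic iterates are Fejér monotone
with respect to `⋂ Cᵢ`, and the squared lengths of the steps within one cycle are bounded by the
decrements of `d(xₙ, q)²`, which tend to zero. Since `xₙ ∈ Cₘ` for `n ≥ 1`, compactness gives a
subsequence converging to some `z`; as the steps vanish, `z` lies in every `Cᵢ`, and Fejér
monotonicity with respect to `z` upgrades convergence of the subsequence to convergence of the
whole sequence.
-/

open Filter Metric

variable {X : Type*} [MetricSpace X]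

theorem IsHadamard.sq_dist_add_sq_dist_le (hX : IsHadamard X) {C : Set X} (hC : GConvex C)
    {x p : X} (hp : p ∈ C) (hmin : ∀ y ∈ C, dist x p ≤ dist x y) {q : X} (hq : q ∈ C) :
    dist x p ^ 2 + dist p q ^ 2 ≤ dist x q ^ 2 := by
  -- Comparing `q` with the midpoint `c` of `p` and `q` via the CN inequality improves the
  -- coefficient `1 - 2⁻ᵏ` obtained for `c` to `1 - 2⁻⁽ᵏ⁺¹⁾` for `q`.
  have key : ∀ k : ℕ, ∀ q ∈ C,
      (1 - (1 / 2 : ℝ) ^ k) * dist p q ^ 2 ≤ dist x q ^ 2 - dist x p ^ 2 := by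
    intro k
    induction k with
    | zero =>
      intro q hq
      have := pow_le_pow_left₀ dist_nonneg (hmin q hq) 2
      simp only [pow_zero, sub_self, zero_mul]
      linarith
    | succ k ih =>
      intro q hq
      obtain ⟨c, hpc, hqc, hcn⟩ := hX.2 p q
      have hcC : c ∈ C := hC p hp q hq c (by rw [hpc, dist_comm c q, hqc]; ring)
      have hc := ih c hcC
      rw [hpc] at hc
      rw [pow_succ]
      linear_combination 2 * hc + 2 * hcn x
  have hlim : Tendsto (fun k : ℕ => (1 - (1 / 2 : ℝ) ^ k) * dist p q ^ 2) atTop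
      (nhds (dist p q ^ 2)) := by
    simpa using ((tendsto_pow_atTop_nhds_zero_of_lt_one (r := (1 / 2 : ℝ)) (by norm_num)
      (by norm_num)).const_sub (1 : ℝ)).mul_const (dist p q ^ 2)
  linarith [le_of_tendsto' hlim fun k => key k q hq]

theorem compUpTo_succ_apply {α : Type*} (S : ℕ → α → α) (k : ℕ) (x : α) :
    compUpTo S (k + 1) x = S k (compUpTo S k x) := rfl

def FirmlyQuasiNonexpansiveAt (T : X → X) (q : X) : Prop :=
  ∀ y, dist y (T y) ^ 2 + dist (T y) q ^ 2 ≤ dist y q ^ 2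

section FirmlyQuasiNonexpansive

variable {S : ℕ → X → X} {k : ℕ} {q : X}

theorem sum_sq_dist_compUpTo_add_sq_dist_le
    (hS : ∀ i < k, FirmlyQuasiNonexpansiveAt (S i) q) (x : X) :
    ∑ i ∈ Finset.range k, dist (compUpTo S i x) (compUpTo S (i + 1) x) ^ 2
      + dist (compUpTo S k x) q ^ 2 ≤ dist x q ^ 2 := by
  induction k with
  | zero => simp [compUpTo]
  | succ k ih =>
    have hlast := hS k k.lt_succ_self (compUpTo S k x)
    have hfirst := ih fun i hi => hS i (hi.trans k.lt_succ_self)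
    rw [Finset.sum_range_succ, compUpTo_succ_apply]
    linarith

theorem dist_compUpTo_le
    (hS : ∀ i < k, FirmlyQuasiNonexpansiveAt (S i) q) (x : X) :
    dist (compUpTo S k x) q ≤ dist x q := by
  have h := sum_sq_dist_compUpTo_add_sq_dist_le hS x
  have hsum : 0 ≤ ∑ i ∈ Finset.range k, dist (compUpTo S i x) (compUpTo S (i + 1) x) ^ 2 :=
    Finset.sum_nonneg fun _ _ => sq_nonneg _
  exact (pow_le_pow_iff_left₀ dist_nonneg dist_nonneg two_ne_zero).1 (by linarith)

theorem dist_compUpTo_le_mul_sqrt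
    (hS : ∀ i < k, FirmlyQuasiNonexpansiveAt (S i) q) (x : X)
    {i : ℕ} (hi : i ≤ k) :
    dist x (compUpTo S i x) ≤ i * √(dist x q ^ 2 - dist (compUpTo S k x) q ^ 2) := by
  have hstep : ∀ {j}, j < i → dist (compUpTo S j x) (compUpTo S (j + 1) x) ≤
      √(dist x q ^ 2 - dist (compUpTo S k x) q ^ 2) := by
    intro j hj
    refine Real.le_sqrt_of_sq_le ?_
    have h := sum_sq_dist_compUpTo_add_sq_dist_le hS x
    have hj' := Finset.single_le_sum (fun l _ => sq_nonneg
      (dist (compUpTo S l x) (compUpTo S (l + 1) x))) (Finset.mem_range.2 (hj.trans_le hi))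
    linarith
  simpa [compUpTo] using dist_le_range_sum_of_dist_le (f := fun j => compUpTo S j x) i hstep

theorem antitone_dist_iterate_compUpTo
    (hS : ∀ i < k, FirmlyQuasiNonexpansiveAt (S i) q) (x₀ : X) :
    Antitone fun n => dist ((compUpTo S k)^[n] x₀) q :=
  antitone_nat_of_succ_le fun n => by
    simpa only [Function.iterate_succ_apply'] using dist_compUpTo_le hS _

theorem tendsto_dist_compUpTo_iterate
    (hS : ∀ i < k, FirmlyQuasiNonexpansiveAt (S i) q) (x₀ : X)
    {i : ℕ} (hi : i ≤ k) :
    Tendsto (fun n => dist ((compUpTo S k)^[n] x₀) (compUpTo S i ((compUpTo S k)^[n] x₀)))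
      atTop (nhds 0) := by
  set a : ℕ → ℝ := fun n => dist ((compUpTo S k)^[n] x₀) q
  have ha : Tendsto a atTop (nhds (⨅ n, a n)) :=
    tendsto_atTop_ciInf (antitone_dist_iterate_compUpTo hS x₀)
      ⟨0, by rintro _ ⟨n, rfl⟩; exact dist_nonneg⟩
  have hdecr : Tendsto (fun n => √(a n ^ 2 - a (n + 1) ^ 2)) atTop (nhds 0) := by
    simpa using ((ha.pow 2).sub ((ha.comp (tendsto_add_atTop_nat 1)).pow 2)).sqrt
  refine squeeze_zero (fun _ => dist_nonneg) (fun n => ?_) (by simpa using hdecr.const_mul (i : ℝ))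
  simpa only [a, Function.iterate_succ_apply'] using dist_compUpTo_le_mul_sqrt hS _ hi

end FirmlyQuasiNonexpansive

theorem tendsto_of_antitone_dist_of_subseq {x : ℕ → X} {z : X}
    (hanti : Antitone fun n => dist (x n) z) {φ : ℕ → ℕ} (hφ : StrictMono φ)
    (hsub : Tendsto (x ∘ φ) atTop (nhds z)) : Tendsto x atTop (nhds z) := by
  rw [tendsto_iff_dist_tendsto_zero] at hsub ⊢
  have hinf := tendsto_atTop_ciInf hanti ⟨0, by rintro _ ⟨n, rfl⟩; exact dist_nonneg⟩
  rwa [tendsto_nhds_unique (hinf.comp hφ.tendsto_atTop) hsub] at hinf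

theorem stmt13_general {X : Type*} [MetricSpace X] (hX : IsHadamard X) (m : ℕ) (hm : 1 ≤ m)
    (C : ℕ → Set X)
    (hcl : ∀ i < m, IsClosed (C i))
    (hcv : ∀ i < m, GConvex (C i))
    (hInt : (⋂ i ∈ Finset.range m, C i).Nonempty)
    (hcpt : IsCompact (C (m - 1)))
    (P : ℕ → X → X)
    (hP : ∀ i < m, ∀ x : X, P i x ∈ C i ∧ ∀ y ∈ C i, dist x (P i x) ≤ dist x y)
    (x₀ : X) :
    ∃ z : X, z ∈ (⋂ i ∈ Finset.range m, C i) ∧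
      Tendsto (fun n : ℕ => (compUpTo P m)^[n] x₀) atTop (nhds z) := by
  have hfirm : ∀ q ∈ ⋂ i ∈ Finset.range m, C i, ∀ i < m, FirmlyQuasiNonexpansiveAt (P i) q :=
    fun q hq i hi y =>
      hX.sq_dist_add_sq_dist_le (hcv i hi) (hP i hi y).1 (hP i hi y).2
        (Set.mem_iInter₂.1 hq i (Finset.mem_range.2 hi))
  have hlast : ∀ y, compUpTo P m y ∈ C (m - 1) := by
    obtain ⟨l, rfl⟩ : ∃ l, m = l + 1 := ⟨m - 1, by omega⟩
    exact fun y => (hP l l.lt_succ_self _).1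
  obtain ⟨q, hq⟩ := hInt
  set x : ℕ → X := fun n => (compUpTo P m)^[n] x₀
  obtain ⟨z, -, φ, hφ, hsub⟩ := hcpt.tendsto_subseq (x := fun n => x (n + 1))
    fun n => by simpa only [x, Function.iterate_succ_apply'] using hlast _
  have hφ' : StrictMono fun j => φ j + 1 := fun _ _ h => Nat.succ_lt_succ (hφ h)
  have hz : z ∈ ⋂ i ∈ Finset.range m, C i := by
    refine Set.mem_iInter₂.2 fun i hi => ?_
    have hi := Finset.mem_range.1 hi
    refine (hcl i hi).mem_of_tendsto (hsub.congr_dist <|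
      (tendsto_dist_compUpTo_iterate (hfirm q hq) x₀ hi).comp hφ'.tendsto_atTop)
      (Eventually.of_forall fun j => (hP i hi _).1)
  exact ⟨z, hz, tendsto_of_antitone_dist_of_subseq
    (antitone_dist_iterate_compUpTo (hfirm z hz) x₀) hφ' hsub⟩

theorem stmt13 {X : Type*} [MetricSpace X] (hX : IsHadamard X) (m : ℕ) (hm : 1 ≤ m)
    (C : ℕ → Set X)
    (hne : ∀ i < m, (C i).Nonempty) (hcl : ∀ i < m, IsClosed (C i))
    (hcv : ∀ i < m, GConvex (C i))
    (hInt : (⋂ i ∈ Finset.range m, C i).Nonempty)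
    (hcpt : IsCompact (C (m - 1)))
    (P : ℕ → X → X)
    (hP : ∀ i < m, ∀ x : X, P i x ∈ C i ∧ ∀ y ∈ C i, dist x (P i x) ≤ dist x y)
    (x₀ : X) :
    ∃ z : X, z ∈ (⋂ i ∈ Finset.range m, C i) ∧
      Tendsto (fun n : ℕ => (compUpTo P m)^[n] x₀) atTop (nhds z) :=
  stmt13_general hX m hm C hcl hcv hInt hcpt P hP x₀
end
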